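/- arXiv:1903.09945 — 2 statements merged into one kernel-verified Lean document; each statement's English description precedes it below -/
import Mathlib

section
/- Let f > 0 and u² + v² < f, and suppose additionally u² + v² < 1 and f − u² − v² < 1 and f − 2u√(f−u²−v²) > 0. With the substitution x₁ = u cos α − v sin α, y₁ = u sin α + v cos α, x₂ = √(f−u²−v²) cos α, y₂ = √(f−u²−v²) sin α, the Hamiltonian H (with Γ₁=Γ₂=1) satisfies H = H₁(u,v), where H₁(u,v) = ½{ln[(1−u²−v²)(1−f+u²+v²)] − (c+ε)ln(f − 2u√(f−u²−v²)) + ε ln[(1 − u√(f−u²−v²))² + v²(f−u²−v²)]}. -/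
noncomputable def Hcart (c ε x₁ y₁ x₂ y₂ : ℝ) : ℝ :=
  (1/2) * (Real.log (1 - x₁^2 - y₁^2) + Real.log (1 - x₂^2 - y₂^2)
    + ε * Real.log ((x₁ - x₂)^2 + (y₁ - y₂)^2 + (1 - x₁^2 - y₁^2) * (1 - x₂^2 - y₂^2))
    - (c + ε) * Real.log ((x₁ - x₂)^2 + (y₁ - y₂)^2))

noncomputable def H₁ (c ε f u v : ℝ) : ℝ :=
  (1/2) * (Real.log ((1 - u^2 - v^2) * (1 - f + u^2 + v^2))
    - (c + ε) * Real.log (f - 2*u*Real.sqrt (f - u^2 - v^2))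
    + ε * Real.log ((1 - u*Real.sqrt (f - u^2 - v^2))^2 + v^2 * (f - u^2 - v^2)))

/-!
`Hcart` depends on the two points only through their norms and their distance, so it is
invariant under a common rotation by `α`. Undoing the rotation puts the vortices at `(u, v)` and
`(√(f - u² - v²), 0)`, where `H₁` is a direct evaluation using `s² = f - u² - v²`.
-/

open Real

lemma rotate_sq_add_sq (x y α : ℝ) :
    (x * cos α - y * sin α) ^ 2 + (x * sin α + y * cos α) ^ 2 = x ^ 2 + y ^ 2 := by
  linear_combination (x ^ 2 + y ^ 2) * sin_sq_add_cos_sq α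

lemma one_sub_rotate_sq_sub_sq (x y α : ℝ) :
    1 - (x * cos α - y * sin α) ^ 2 - (x * sin α + y * cos α) ^ 2 = 1 - x ^ 2 - y ^ 2 := by
  linear_combination -rotate_sq_add_sq x y α

lemma Hcart_rotate (c ε x₁ y₁ x₂ y₂ α : ℝ) :
    Hcart c ε (x₁ * cos α - y₁ * sin α) (x₁ * sin α + y₁ * cos α)
      (x₂ * cos α - y₂ * sin α) (x₂ * sin α + y₂ * cos α) = Hcart c ε x₁ y₁ x₂ y₂ := by
  have hdist : (x₁ * cos α - y₁ * sin α - (x₂ * cos α - y₂ * sin α)) ^ 2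
      + (x₁ * sin α + y₁ * cos α - (x₂ * sin α + y₂ * cos α)) ^ 2
      = (x₁ - x₂) ^ 2 + (y₁ - y₂) ^ 2 := by
    linear_combination rotate_sq_add_sq (x₁ - x₂) (y₁ - y₂) α
  simp only [Hcart, one_sub_rotate_sq_sub_sq, hdist]

lemma Hcart_axis_eq_H₁ (c ε f u v : ℝ) (h : u ^ 2 + v ^ 2 ≤ f) (h1 : u ^ 2 + v ^ 2 < 1)
    (h2 : f - u ^ 2 - v ^ 2 < 1) :
    Hcart c ε u v (√(f - u ^ 2 - v ^ 2)) 0 = H₁ c ε f u v := by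
  set s := √(f - u ^ 2 - v ^ 2) with hs
  have hs2 : s ^ 2 = f - u ^ 2 - v ^ 2 := sq_sqrt (by linarith)
  have hself : 1 - s ^ 2 - 0 ^ 2 = 1 - f + u ^ 2 + v ^ 2 := by linear_combination -hs2
  have hdist : (u - s) ^ 2 + (v - 0) ^ 2 = f - 2 * u * s := by linear_combination hs2
  have hcross : f - 2 * u * s + (1 - u ^ 2 - v ^ 2) * (1 - f + u ^ 2 + v ^ 2)
      = (1 - u * s) ^ 2 + v ^ 2 * (f - u ^ 2 - v ^ 2) := by
    linear_combination -u ^ 2 * hs2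
  rw [Hcart, H₁, ← hs, hself, hdist, hcross, log_mul (by linarith) (by linarith)]
  ring

theorem reduced_hamiltonian_general (c ε f u v α : ℝ) (h : u^2 + v^2 < f)
    (h1 : u^2 + v^2 < 1) (h2 : f - u^2 - v^2 < 1) :
    Hcart c ε (u * Real.cos α - v * Real.sin α) (u * Real.sin α + v * Real.cos α)
      (Real.sqrt (f - u^2 - v^2) * Real.cos α) (Real.sqrt (f - u^2 - v^2) * Real.sin α)
      = H₁ c ε f u v := by
  have hrot := Hcart_rotate c ε u v (√(f - u ^ 2 - v ^ 2)) 0 α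
  simp only [zero_mul, sub_zero, add_zero] at hrot
  rw [hrot, Hcart_axis_eq_H₁ c ε f u v h.le h1 h2]

theorem reduced_hamiltonian (c ε f u v α : ℝ) (hf : 0 < f) (h : u^2 + v^2 < f)
    (h1 : u^2 + v^2 < 1) (h2 : f - u^2 - v^2 < 1)
    (h3 : 0 < f - 2*u*Real.sqrt (f - u^2 - v^2)) :
    Hcart c ε (u * Real.cos α - v * Real.sin α) (u * Real.sin α + v * Real.cos α)
      (Real.sqrt (f - u^2 - v^2) * Real.cos α) (Real.sqrt (f - u^2 - v^2) * Real.sin α)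
      = H₁ c ε f u v :=
  reduced_hamiltonian_general c ε f u v α h h1 h2
end

section
/- Define the Poisson bracket {A,B} = Σ_{k=1,2} (1/Γ_k)(∂A/∂x_k · ∂B/∂y_k − ∂A/∂y_k · ∂B/∂x_k) for smooth functions A, B of (x₁,y₁,x₂,y₂), with Γ₁=Γ₂=1. Then for U = (x₁x₂+y₁y₂)/√(x₂²+y₂²) and V = (y₁x₂−x₁y₂)/√(x₂²+y₂²), one has {U,V} = 1 at every point with x₂²+y₂² > 0. -/
noncomputable def U (x₁ y₁ x₂ y₂ : ℝ) : ℝ := (x₁*x₂ + y₁*y₂) / Real.sqrt (x₂^2 + y₂^2)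
noncomputable def V (x₁ y₁ x₂ y₂ : ℝ) : ℝ := (y₁*x₂ - x₁*y₂) / Real.sqrt (x₂^2 + y₂^2)

/-- Poisson bracket with Γ₁ = Γ₂ = 1, written via partial derivatives as
derivatives of one-variable slices. -/
noncomputable def bracket (A B : ℝ → ℝ → ℝ → ℝ → ℝ) (x₁ y₁ x₂ y₂ : ℝ) : ℝ :=
  (deriv (fun t => A t y₁ x₂ y₂) x₁) * (deriv (fun t => B x₁ t x₂ y₂) y₁)
  - (deriv (fun t => A x₁ t x₂ y₂) y₁) * (deriv (fun t => B t y₁ x₂ y₂) x₁)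
  + (deriv (fun t => A x₁ y₁ t y₂) x₂) * (deriv (fun t => B x₁ y₁ x₂ t) y₂)
  - (deriv (fun t => A x₁ y₁ x₂ t) y₂) * (deriv (fun t => B x₁ y₁ t y₂) x₂)

/-! Write `r = √(x₂² + y₂²)`. In the variables `(x₁, y₁)`, `(U, V)` is the rotation of `(x₁, y₁)`
by the unit vector `(x₂, y₂) / r`, so the first half of the bracket is its determinant, `1`. In the
variables `(x₂, y₂)`, `U` and `V` are homogeneous of degree `0`, so both gradients are orthogonal to
`(x₂, y₂)`, hence parallel, and the second half of the bracket vanishes. -/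

open Real

section SliceDerivatives

variable {a b : ℝ}

theorem hasDerivAt_affine (c d a : ℝ) : HasDerivAt (fun t => c * t + d) c a := by
  simpa using ((hasDerivAt_id a).const_mul c).add_const d

theorem hasDerivAt_sqrt_sq_add_sq (h : 0 < a ^ 2 + b ^ 2) :
    HasDerivAt (fun t => √(t ^ 2 + b ^ 2)) (a / √(a ^ 2 + b ^ 2)) a := by
  have hsq : HasDerivAt (fun t => t ^ 2 + b ^ 2) (2 * a) a := by
    simpa using (hasDerivAt_pow 2 a).add_const (b ^ 2)
  refine ((hasDerivAt_sqrt h.ne').comp a hsq).congr_deriv ?_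
  field_simp

theorem hasDerivAt_affine_div_sqrt (c d : ℝ) (h : 0 < a ^ 2 + b ^ 2) :
    HasDerivAt (fun t => (c * t + d) / √(t ^ 2 + b ^ 2))
      ((c * b ^ 2 - d * a) / √(a ^ 2 + b ^ 2) ^ 3) a := by
  have hr : √(a ^ 2 + b ^ 2) ≠ 0 := (sqrt_pos.mpr h).ne'
  have hr2 : √(a ^ 2 + b ^ 2) ^ 2 = a ^ 2 + b ^ 2 := sq_sqrt h.le
  refine ((hasDerivAt_affine c d a).div (hasDerivAt_sqrt_sq_add_sq h) hr).congr_deriv ?_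
  field_simp
  linear_combination c * hr2

end SliceDerivatives

section PartialDerivatives

variable (x₁ y₁ x₂ y₂ : ℝ)

theorem deriv_U_x₁ : deriv (fun t => U t y₁ x₂ y₂) x₁ = x₂ / √(x₂ ^ 2 + y₂ ^ 2) := by
  have hU : (fun t => U t y₁ x₂ y₂) = fun t => (x₂ * t + y₁ * y₂) / √(x₂ ^ 2 + y₂ ^ 2) := by
    funext t; simp only [U]; ring
  rw [hU, ((hasDerivAt_affine _ _ x₁).div_const _).deriv]

theorem deriv_U_y₁ : deriv (fun t => U x₁ t x₂ y₂) y₁ = y₂ / √(x₂ ^ 2 + y₂ ^ 2) := by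
  have hU : (fun t => U x₁ t x₂ y₂) = fun t => (y₂ * t + x₁ * x₂) / √(x₂ ^ 2 + y₂ ^ 2) := by
    funext t; simp only [U]; ring
  rw [hU, ((hasDerivAt_affine _ _ y₁).div_const _).deriv]

theorem deriv_V_x₁ : deriv (fun t => V t y₁ x₂ y₂) x₁ = -y₂ / √(x₂ ^ 2 + y₂ ^ 2) := by
  have hV : (fun t => V t y₁ x₂ y₂) = fun t => (-y₂ * t + y₁ * x₂) / √(x₂ ^ 2 + y₂ ^ 2) := by
    funext t; simp only [V]; ring
  rw [hV, ((hasDerivAt_affine _ _ x₁).div_const _).deriv]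

theorem deriv_V_y₁ : deriv (fun t => V x₁ t x₂ y₂) y₁ = x₂ / √(x₂ ^ 2 + y₂ ^ 2) := by
  have hV : (fun t => V x₁ t x₂ y₂) = fun t => (x₂ * t + -(x₁ * y₂)) / √(x₂ ^ 2 + y₂ ^ 2) := by
    funext t; simp only [V]; ring
  rw [hV, ((hasDerivAt_affine _ _ y₁).div_const _).deriv]

variable {x₂ y₂}

theorem deriv_U_x₂ (h : 0 < x₂ ^ 2 + y₂ ^ 2) :
    deriv (fun t => U x₁ y₁ t y₂) x₂ =
      y₂ * (x₁ * y₂ - y₁ * x₂) / √(x₂ ^ 2 + y₂ ^ 2) ^ 3 := by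
  have hU : (fun t => U x₁ y₁ t y₂) = fun t => (x₁ * t + y₁ * y₂) / √(t ^ 2 + y₂ ^ 2) := rfl
  rw [hU, (hasDerivAt_affine_div_sqrt _ _ h).deriv]
  ring

theorem deriv_V_x₂ (h : 0 < x₂ ^ 2 + y₂ ^ 2) :
    deriv (fun t => V x₁ y₁ t y₂) x₂ =
      y₂ * (x₁ * x₂ + y₁ * y₂) / √(x₂ ^ 2 + y₂ ^ 2) ^ 3 := by
  have hV : (fun t => V x₁ y₁ t y₂) = fun t => (y₁ * t + -(x₁ * y₂)) / √(t ^ 2 + y₂ ^ 2) := by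
    funext t; simp only [V]; ring
  rw [hV, (hasDerivAt_affine_div_sqrt _ _ h).deriv]
  ring

theorem deriv_U_y₂ (h : 0 < x₂ ^ 2 + y₂ ^ 2) :
    deriv (fun t => U x₁ y₁ x₂ t) y₂ =
      -x₂ * (x₁ * y₂ - y₁ * x₂) / √(x₂ ^ 2 + y₂ ^ 2) ^ 3 := by
  have hU : (fun t => U x₁ y₁ x₂ t) = fun t => (y₁ * t + x₁ * x₂) / √(t ^ 2 + x₂ ^ 2) := by
    funext t; simp only [U]; rw [add_comm (x₂ ^ 2)]; ring
  rw [add_comm (x₂ ^ 2)] at h ⊢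
  rw [hU, (hasDerivAt_affine_div_sqrt _ _ h).deriv]
  ring

theorem deriv_V_y₂ (h : 0 < x₂ ^ 2 + y₂ ^ 2) :
    deriv (fun t => V x₁ y₁ x₂ t) y₂ =
      -x₂ * (x₁ * x₂ + y₁ * y₂) / √(x₂ ^ 2 + y₂ ^ 2) ^ 3 := by
  have hV : (fun t => V x₁ y₁ x₂ t) = fun t => (-x₁ * t + y₁ * x₂) / √(t ^ 2 + x₂ ^ 2) := by
    funext t; simp only [V]; rw [add_comm (x₂ ^ 2)]; ring
  rw [add_comm (x₂ ^ 2)] at h ⊢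
  rw [hV, (hasDerivAt_affine_div_sqrt _ _ h).deriv]
  ring

end PartialDerivatives

theorem UV_canonical (x₁ y₁ x₂ y₂ : ℝ) (h : 0 < x₂^2 + y₂^2) :
    bracket U V x₁ y₁ x₂ y₂ = 1 := by
  have hr : √(x₂ ^ 2 + y₂ ^ 2) ≠ 0 := (sqrt_pos.mpr h).ne'
  have hr2 : √(x₂ ^ 2 + y₂ ^ 2) ^ 2 = x₂ ^ 2 + y₂ ^ 2 := sq_sqrt h.le
  rw [bracket, deriv_U_x₁, deriv_U_y₁, deriv_V_x₁, deriv_V_y₁, deriv_U_x₂ _ _ h, deriv_U_y₂ _ _ h,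
    deriv_V_x₂ _ _ h, deriv_V_y₂ _ _ h]
  field_simp
  linear_combination -√(x₂ ^ 2 + y₂ ^ 2) ^ 4 * hr2
end
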